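/- arXiv:2603.17971 — 2 statements merged into one kernel-verified Lean document; each statement's English description precedes it below -/
import Mathlib

section
/- For any real κ and any involution σ (a Hermitian unitary operator with σ² = I) on a finite-dimensional Hilbert space, e^{-κσ} = A(e^{-i(Wσ+bI)} + e^{i(Wσ+bI)}) where A = e^{|κ|}/2, W = (1/2)arccos(e^{-2|κ|}), and b = sign(κ)·W. -/
open Matrix

/-- RBM normalization `A(κ) = e^{|κ|}/2`. -/
noncomputable def Aparam (κ : ℝ) : ℝ := Real.exp |κ| / 2

/-- RBM weight `W(κ) = (1/2) arccos(e^{-2|κ|})`. -/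
noncomputable def Wparam (κ : ℝ) : ℝ := Real.arccos (Real.exp (-2 * |κ|)) / 2

/-- RBM bias `b(κ) = sign(κ) W(κ)`. -/
noncomputable def bparam (κ : ℝ) : ℝ := Real.sign κ * Wparam κ

/-!
Since `σ² = 1`, the exponential series of `zσ` splits into its even and odd parts,
`exp (zσ) = cosh z + sinh z • σ`. Hence, for `M = Wσ + b`,
`exp (-iM) + exp (iM) = 2 cos b cos W - 2 sin b sin W • σ`,
while `exp (-κσ) = cosh κ - sinh κ • σ`, and the theorem reduces to the scalar identities
`2A cos b cos W = cosh κ` and `2A sin b sin W = sinh κ`. These are even, respectively odd,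
in `κ`, so one may take `κ ≥ 0`; then `b = W`, and both follow from `cos 2W = e^{-2κ}` and
the half-angle formulas.
-/

open scoped Nat

section Involution

variable {𝔸 : Type*} [NormedRing 𝔸] [NormedAlgebra ℂ 𝔸] [CompleteSpace 𝔸] {σ : 𝔸}

theorem exp_smul_of_mul_self_eq_one (hσ : σ * σ = 1) (z : ℂ) :
    NormedSpace.exp (z • σ) = Complex.cosh z • (1 : 𝔸) + Complex.sinh z • σ := by
  have hpow : ∀ k : ℕ, σ ^ (2 * k) = 1 := fun k => by rw [pow_mul, sq, hσ, one_pow]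
  have hcosh : HasSum (fun k : ℕ => ((2 * k)! : ℂ)⁻¹ • (z • σ) ^ (2 * k))
      (Complex.cosh z • 1) := by
    convert (Complex.hasSum_cosh z).smul_const (1 : 𝔸) using 2 with k
    rw [smul_pow, hpow, smul_smul, div_eq_inv_mul]
  have hsinh : HasSum (fun k : ℕ => ((2 * k + 1)! : ℂ)⁻¹ • (z • σ) ^ (2 * k + 1))
      (Complex.sinh z • σ) := by
    convert (Complex.hasSum_sinh z).smul_const σ using 2 with k
    rw [smul_pow, pow_succ σ, hpow, one_mul, smul_smul, div_eq_inv_mul]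
  exact (NormedSpace.exp_series_hasSum_exp' (𝕂 := ℂ) (z • σ)).unique (hcosh.even_add_odd hsinh)

theorem exp_add_smul_one (a : 𝔸) (b : ℂ) :
    NormedSpace.exp (a + b • (1 : 𝔸)) = Complex.exp b • NormedSpace.exp a := by
  -- `NormedSpace.exp` does not depend on the `ℚ`-algebra structure, so any one will do.
  let : NormedAlgebra ℚ 𝔸 := NormedAlgebra.restrictScalars ℚ ℂ 𝔸
  rw [NormedSpace.exp_add_of_commute ((Commute.one_right a).smul_right b),
    ← Algebra.algebraMap_eq_smul_one, ← NormedSpace.algebraMap_exp_comm, ← Complex.exp_eq_exp_ℂ,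
    Algebra.algebraMap_eq_smul_one, mul_smul_one]

theorem exp_neg_I_smul_add_exp_I_smul (hσ : σ * σ = 1) (w b : ℂ) :
    NormedSpace.exp (-Complex.I • (w • σ + b • (1 : 𝔸))) +
        NormedSpace.exp (Complex.I • (w • σ + b • (1 : 𝔸))) =
      (2 * Complex.cos b * Complex.cos w) • (1 : 𝔸) - (2 * Complex.sin b * Complex.sin w) • σ := by
  have hsmul (c : ℂ) : c • (w • σ + b • (1 : 𝔸)) = (w * c) • σ + (b * c) • 1 := by
    rw [smul_add, smul_smul, smul_smul, mul_comm c, mul_comm c]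
  have hexp_neg : Complex.exp (-(b * Complex.I)) = Complex.cos b - Complex.sin b * Complex.I := by
    rw [← neg_mul, Complex.exp_mul_I, Complex.cos_neg, Complex.sin_neg, neg_mul, ← sub_eq_add_neg]
  simp only [hsmul, exp_add_smul_one, exp_smul_of_mul_self_eq_one hσ, mul_neg, Complex.cosh_neg,
    Complex.sinh_neg, Complex.cosh_mul_I, Complex.sinh_mul_I, Complex.exp_mul_I, hexp_neg]
  match_scalars
  · ring
  · linear_combination (2 * Complex.sin b * Complex.sin w) * Complex.I_sq

end Involution

/- Matrices carry no global norm, but `NormedSpace.exp` only sees the topology, so the lemmas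
above apply with any algebra norm, here the `ℓ∞` operator norm. -/
namespace Matrix

variable {n : Type*} [Fintype n] [DecidableEq n] {σ : Matrix n n ℂ}

theorem exp_smul_of_mul_self_eq_one (hσ : σ * σ = 1) (z : ℂ) :
    NormedSpace.exp (z • σ) = Complex.cosh z • (1 : Matrix n n ℂ) + Complex.sinh z • σ := by
  let : NormedRing (Matrix n n ℂ) := Matrix.linftyOpNormedRing
  let : NormedAlgebra ℂ (Matrix n n ℂ) := Matrix.linftyOpNormedAlgebra
  exact _root_.exp_smul_of_mul_self_eq_one hσ z

theorem exp_neg_I_smul_add_exp_I_smul (hσ : σ * σ = 1) (w b : ℂ) :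
    NormedSpace.exp (-Complex.I • (w • σ + b • (1 : Matrix n n ℂ))) +
        NormedSpace.exp (Complex.I • (w • σ + b • (1 : Matrix n n ℂ))) =
      (2 * Complex.cos b * Complex.cos w) • (1 : Matrix n n ℂ) -
        (2 * Complex.sin b * Complex.sin w) • σ := by
  let : NormedRing (Matrix n n ℂ) := Matrix.linftyOpNormedRing
  let : NormedAlgebra ℂ (Matrix n n ℂ) := Matrix.linftyOpNormedAlgebra
  exact _root_.exp_neg_I_smul_add_exp_I_smul hσ w b

end Matrix

section Parameters

variable (κ : ℝ)

theorem Aparam_neg : Aparam (-κ) = Aparam κ := by rw [Aparam, Aparam, abs_neg]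

theorem Wparam_neg : Wparam (-κ) = Wparam κ := by rw [Wparam, Wparam, abs_neg]

theorem bparam_neg : bparam (-κ) = -bparam κ := by
  rw [bparam, bparam, Real.sign_neg, Wparam_neg, neg_mul]

theorem Wparam_zero : Wparam 0 = 0 := by simp [Wparam]

variable {κ}

theorem bparam_of_nonneg (hκ : 0 ≤ κ) : bparam κ = Wparam κ := by
  rcases hκ.eq_or_lt with rfl | hκ
  · simp [bparam, Wparam_zero]
  · rw [bparam, Real.sign_of_pos hκ, one_mul]

theorem exp_mul_cos_two_mul_Wparam (hκ : 0 ≤ κ) :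
    Real.exp κ * Real.cos (2 * Wparam κ) = Real.exp (-κ) := by
  have hexp_le : Real.exp (-2 * κ) ≤ 1 := Real.exp_le_one_iff.mpr (by linarith)
  rw [Wparam, mul_div_cancel₀ _ two_ne_zero, abs_of_nonneg hκ,
    Real.cos_arccos (by linarith [Real.exp_pos (-2 * κ)]) hexp_le, ← Real.exp_add]
  ring_nf

theorem two_mul_Aparam_mul_cos_sq_Wparam (hκ : 0 ≤ κ) :
    2 * Aparam κ * Real.cos (Wparam κ) ^ 2 = Real.cosh κ := by
  rw [Aparam, abs_of_nonneg hκ, Real.cos_sq, Real.cosh_eq]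
  linear_combination exp_mul_cos_two_mul_Wparam hκ / 2

theorem two_mul_Aparam_mul_sin_sq_Wparam (hκ : 0 ≤ κ) :
    2 * Aparam κ * Real.sin (Wparam κ) ^ 2 = Real.sinh κ := by
  rw [Aparam, abs_of_nonneg hκ, Real.sin_sq, Real.cos_sq, Real.sinh_eq]
  linear_combination -exp_mul_cos_two_mul_Wparam hκ / 2

variable (κ)

theorem two_mul_Aparam_mul_cos_bparam_mul_cos_Wparam :
    2 * Aparam κ * Real.cos (bparam κ) * Real.cos (Wparam κ) = Real.cosh κ := by
  wlog hκ : 0 ≤ κ generalizing κ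
  · simpa [Aparam_neg, Wparam_neg, bparam_neg] using this (-κ) (by linarith)
  rw [bparam_of_nonneg hκ, mul_assoc, ← sq, two_mul_Aparam_mul_cos_sq_Wparam hκ]

theorem two_mul_Aparam_mul_sin_bparam_mul_sin_Wparam :
    2 * Aparam κ * Real.sin (bparam κ) * Real.sin (Wparam κ) = Real.sinh κ := by
  wlog hκ : 0 ≤ κ generalizing κ
  · simpa [Aparam_neg, Wparam_neg, bparam_neg] using this (-κ) (by linarith)
  rw [bparam_of_nonneg hκ, mul_assoc, ← sq, two_mul_Aparam_mul_sin_sq_Wparam hκ]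

end Parameters

theorem rbm_decomposition_general {d : ℕ} (κ : ℝ) (σ : Matrix (Fin d) (Fin d) ℂ)
    (hinv : σ * σ = 1) :
    NormedSpace.exp ((-κ : ℂ) • σ) =
      ((Aparam κ : ℝ) : ℂ) •
        (NormedSpace.exp ((-Complex.I) •
            (((Wparam κ : ℝ) : ℂ) • σ + ((bparam κ : ℝ) : ℂ) • (1 : Matrix (Fin d) (Fin d) ℂ))) +
         NormedSpace.exp (Complex.I •
            (((Wparam κ : ℝ) : ℂ) • σ + ((bparam κ : ℝ) : ℂ) • (1 : Matrix (Fin d) (Fin d) ℂ)))) := by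
  have hcosh : ((Aparam κ : ℝ) : ℂ) * (2 * Complex.cos (bparam κ) * Complex.cos (Wparam κ)) =
      Complex.cosh (-κ) := by
    rw [Complex.cosh_neg, ← Complex.ofReal_cosh, ← two_mul_Aparam_mul_cos_bparam_mul_cos_Wparam]
    push_cast; ring
  have hsinh : ((Aparam κ : ℝ) : ℂ) * (2 * Complex.sin (bparam κ) * Complex.sin (Wparam κ)) =
      -Complex.sinh (-κ) := by
    rw [Complex.sinh_neg, neg_neg, ← Complex.ofReal_sinh,
      ← two_mul_Aparam_mul_sin_bparam_mul_sin_Wparam]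
    push_cast; ring
  rw [Matrix.exp_smul_of_mul_self_eq_one hinv, Matrix.exp_neg_I_smul_add_exp_I_smul hinv, smul_sub,
    smul_smul, smul_smul, hcosh, hsinh, neg_smul, sub_neg_eq_add]

/-- For any real `κ` and any Hermitian involution `σ`,
`e^{-κσ} = A (e^{-i(Wσ + bI)} + e^{i(Wσ + bI)})`. -/
theorem rbm_decomposition {d : ℕ} (κ : ℝ) (σ : Matrix (Fin d) (Fin d) ℂ)
    (hherm : σ.IsHermitian) (hinv : σ * σ = 1) :
    NormedSpace.exp ((-κ : ℂ) • σ) =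
      ((Aparam κ : ℝ) : ℂ) •
        (NormedSpace.exp ((-Complex.I) •
            (((Wparam κ : ℝ) : ℂ) • σ + ((bparam κ : ℝ) : ℂ) • (1 : Matrix (Fin d) (Fin d) ℂ))) +
         NormedSpace.exp (Complex.I •
            (((Wparam κ : ℝ) : ℂ) • σ + ((bparam κ : ℝ) : ℂ) • (1 : Matrix (Fin d) (Fin d) ℂ)))) :=
  rbm_decomposition_general κ σ hinv
end

section
/- A Pauli string O with prescribed commutation relations ({O, σⱼ} = 0 and [O, σᵣ] = 0 for r < j) exists if and only if σⱼ cannot be written (up to phase) as a product of a subset of σ₁,…,σ_{j-1}. -/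
open Matrix

/-- A single-qubit Pauli label. -/
inductive PauliMat : Type
  | I : PauliMat
  | X : PauliMat
  | Y : PauliMat
  | Z : PauliMat
  deriving DecidableEq

instance : Fintype PauliMat :=
  ⟨{.I, .X, .Y, .Z}, fun x => by cases x <;> simp⟩

/-- The 2×2 matrix of a single-qubit Pauli operator. -/
noncomputable def PauliMat.mat : PauliMat → Matrix (Fin 2) (Fin 2) ℂ
  | .I => 1
  | .X => !![0, 1; 1, 0]
  | .Y => !![0, -Complex.I; Complex.I, 0]
  | .Z => !![1, 0; 0, -1]

/-- X-part of the binary symplectic encoding of a single Pauli. -/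
def PauliMat.ax : PauliMat → ZMod 2
  | .I => 0
  | .X => 1
  | .Y => 1
  | .Z => 0

/-- Z-part of the binary symplectic encoding of a single Pauli. -/
def PauliMat.bz : PauliMat → ZMod 2
  | .I => 0
  | .X => 0
  | .Y => 1
  | .Z => 1

/-- The matrix of a Pauli string `σ¹ ⊗ ⋯ ⊗ σⁿ` on `n` qubits. -/
noncomputable def PauliString {n : ℕ} (s : Fin n → PauliMat) :
    Matrix (Fin n → Fin 2) (Fin n → Fin 2) ℂ :=
  Matrix.of fun x y => ∏ i, (s i).mat (x i) (y i)

/-- The binary symplectic representation `(b | a) ∈ 𝔽₂ⁿ × 𝔽₂ⁿ` of a Pauli string. -/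
def sympVec {n : ℕ} (s : Fin n → PauliMat) : (Fin n → ZMod 2) × (Fin n → ZMod 2) :=
  (fun i => (s i).bz, fun i => (s i).ax)

/-- The symplectic form `⟨(b|a), (b'|a')⟩ = a·b' + b·a'` on `𝔽₂ⁿ × 𝔽₂ⁿ`. -/
def sympForm {n : ℕ} (u v : (Fin n → ZMod 2) × (Fin n → ZMod 2)) : ZMod 2 :=
  u.2 ⬝ᵥ v.1 + u.1 ⬝ᵥ v.2

/-!
Pauli strings square to the identity and any two of them either commute or anticommute, the sign
being `(-1) ^ ω(p, q)` for the symplectic form `ω` on their binary vectors; as `PauliString s`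
is invertible, these two cases exclude each other. So the required `O` is exactly a vector `u`
(every vector comes from a Pauli string) with `ω(u, p_τ) = 1` and `ω(u, p_σᵢ) = 0`. As `ω` is
nondegenerate, `ω(u, ·)` ranges over all linear functionals, and a functional that is `1` at
`p_τ` and vanishes on the `p_σᵢ` exists iff `p_τ` is outside their span, i.e. over `𝔽₂` iff
`p_τ` is not the sum of a subset of them.
-/

namespace Matrix

variable {ι m R : Type*} [Fintype ι] [CommSemiring R]

def piKron (A : ι → Matrix m m R) : Matrix (ι → m) (ι → m) R :=
  of fun x y => ∏ i, A i (x i) (y i)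

theorem piKron_mul [DecidableEq ι] [Fintype m] (A B : ι → Matrix m m R) :
    piKron A * piKron B = piKron (A * B) := by
  ext x y
  simp only [piKron, mul_apply, of_apply, Pi.mul_apply, ← Finset.prod_mul_distrib,
    Fintype.prod_sum]

theorem piKron_one [DecidableEq m] : piKron (1 : ι → Matrix m m R) = 1 := by
  ext x y
  simp only [piKron, of_apply, Pi.one_apply, one_apply, Fintype.prod_boole, funext_iff]

theorem piKron_smul (c : ι → R) (A : ι → Matrix m m R) :
    piKron (fun i => c i • A i) = (∏ i, c i) • piKron A := by
  ext x y
  simp only [piKron, of_apply, smul_apply, smul_eq_mul, Finset.prod_mul_distrib]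

end Matrix

theorem AddChar.map_finset_sum {ι A M : Type*} [AddCommMonoid A] [CommMonoid M]
    (ψ : AddChar A M) (s : Finset ι) (f : ι → A) : ψ (∑ i ∈ s, f i) = ∏ i ∈ s, ψ (f i) :=
  map_prod ψ.toMonoidHom (fun i => Multiplicative.ofAdd (f i)) s

theorem ZMod.eq_zero_or_eq_one (k : ZMod 2) : k = 0 ∨ k = 1 := by
  revert k; decide

def negOnePowChar : AddChar (ZMod 2) ℂ where
  toFun k := (-1) ^ k.val
  map_zero_eq_one' := by simp
  map_add_eq_mul' a b := by
    rw [ZMod.val_add, ← pow_add, ← neg_one_pow_eq_pow_mod_two]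

@[simp]
theorem negOnePowChar_one : negOnePowChar 1 = -1 := by
  simp [negOnePowChar, ZMod.val_one]

theorem negOnePowChar_injective : Function.Injective negOnePowChar := by
  intro a b h
  rcases ZMod.eq_zero_or_eq_one a with rfl | rfl <;>
    rcases ZMod.eq_zero_or_eq_one b with rfl | rfl <;>
    first | rfl | norm_num at h

theorem exists_dual_eq_one_iff_notMem_span {K V ι : Type*} [Field K] [AddCommGroup V]
    [Module K V] (v : V) (w : ι → V) :
    (∃ f : Module.Dual K V, f v = 1 ∧ ∀ i, f (w i) = 0) ↔
      v ∉ Submodule.span K (Set.range w) := by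
  constructor
  · rintro ⟨f, hv, hw⟩ hspan
    have hker : Submodule.span K (Set.range w) ≤ LinearMap.ker f :=
      Submodule.span_le.2 (Set.range_subset_iff.2 hw)
    simp [LinearMap.mem_ker.1 (hker hspan)] at hv
  · intro hv
    obtain ⟨f, hfv, hf⟩ := Submodule.exists_dual_map_eq_bot_of_notMem hv inferInstance
    refine ⟨(f v)⁻¹ • f, inv_mul_cancel₀ hfv, fun i => ?_⟩
    have : f (w i) ∈ (Submodule.span K (Set.range w)).map f :=
      Submodule.mem_map_of_mem (Submodule.subset_span ⟨i, rfl⟩)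
    simp_all

theorem mem_span_range_iff_exists_finset_sum_zmod_two {V ι : Type*} [AddCommGroup V]
    [Module (ZMod 2) V] [Fintype ι] (v : V) (w : ι → V) :
    v ∈ Submodule.span (ZMod 2) (Set.range w) ↔ ∃ S : Finset ι, v = ∑ i ∈ S, w i := by
  classical
  rw [Submodule.mem_span_range_iff_exists_fun]
  constructor
  · rintro ⟨c, rfl⟩
    refine ⟨Finset.univ.filter (c · = 1), ?_⟩
    rw [Finset.sum_filter]
    refine Finset.sum_congr rfl fun i _ => ?_
    rcases ZMod.eq_zero_or_eq_one (c i) with h | h <;> simp [h]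
  · rintro ⟨S, rfl⟩
    exact ⟨fun i => if i ∈ S then 1 else 0, by simp [ite_smul, Finset.sum_ite_mem]⟩

namespace PauliMat

theorem mat_mul_self (a : PauliMat) : a.mat * a.mat = 1 := by
  cases a <;> ext i j <;> fin_cases i <;> fin_cases j <;> simp [mat]

theorem mat_mul_comm (a b : PauliMat) :
    a.mat * b.mat = negOnePowChar (a.ax * b.bz + a.bz * b.ax) • (b.mat * a.mat) := by
  cases a <;> cases b <;> ext i j <;> fin_cases i <;> fin_cases j <;>
    simp [mat, ax, bz, show (1 + 1 : ZMod 2) = 0 from rfl]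

theorem exists_bz_ax (b a : ZMod 2) : ∃ p : PauliMat, p.bz = b ∧ p.ax = a := by
  revert b a; decide

end PauliMat

section Symplectic

variable {n : ℕ}

theorem sympForm_sympVec (s t : Fin n → PauliMat) :
    sympForm (sympVec s) (sympVec t) = ∑ i, ((s i).ax * (t i).bz + (s i).bz * (t i).ax) := by
  simp only [sympForm, sympVec, dotProduct, Finset.sum_add_distrib]

theorem sympVec_surjective : Function.Surjective (sympVec (n := n)) := by
  choose p hp using PauliMat.exists_bz_ax
  exact fun u => ⟨fun i => p (u.1 i) (u.2 i), by ext i <;> simp [sympVec, hp]⟩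

def sympDual (u : (Fin n → ZMod 2) × (Fin n → ZMod 2)) :
    Module.Dual (ZMod 2) ((Fin n → ZMod 2) × (Fin n → ZMod 2)) where
  toFun := sympForm u
  map_add' v w := by simp only [sympForm, Prod.fst_add, Prod.snd_add, dotProduct_add]; ring
  map_smul' c v := by
    simp only [sympForm, Prod.smul_fst, Prod.smul_snd, dotProduct_smul, smul_eq_mul,
      RingHom.id_apply]; ring

theorem sympDual_apply (u v : (Fin n → ZMod 2) × (Fin n → ZMod 2)) :
    sympDual u v = sympForm u v := rfl

theorem sympDual_surjective : Function.Surjective (sympDual (n := n)) := by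
  intro f
  refine ⟨(fun i => f (0, Pi.single i 1), fun i => f (Pi.single i 1, 0)), ?_⟩
  refine LinearMap.prod_ext (LinearMap.pi_ext fun i x => ?_) (LinearMap.pi_ext fun i x => ?_)
  · simpa [sympDual_apply, sympForm, mul_comm, ← Pi.single_smul'] using
      (map_smul f x (Pi.single i 1, 0)).symm
  · simpa [sympDual_apply, sympForm, mul_comm, ← Pi.single_smul'] using
      (map_smul f x (0, Pi.single i 1)).symm

end Symplectic

section PauliString

variable {n : ℕ}

theorem pauliString_eq_piKron (s : Fin n → PauliMat) :
    PauliString s = piKron fun i => (s i).mat := rfl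

theorem pauliString_mul_self (s : Fin n → PauliMat) : PauliString s * PauliString s = 1 := by
  simp only [pauliString_eq_piKron, piKron_mul, Pi.mul_def, PauliMat.mat_mul_self]
  exact piKron_one

theorem pauliString_mul_comm (s t : Fin n → PauliMat) :
    PauliString s * PauliString t =
      negOnePowChar (sympForm (sympVec s) (sympVec t)) • (PauliString t * PauliString s) := by
  simp only [pauliString_eq_piKron, piKron_mul, Pi.mul_def, sympForm_sympVec,
    AddChar.map_finset_sum, ← piKron_smul]
  exact congrArg piKron (funext fun i => PauliMat.mat_mul_comm (s i) (t i))

theorem pauliString_mul_ne_zero (s t : Fin n → PauliMat) : PauliString s * PauliString t ≠ 0 := by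
  intro h
  have hunit : PauliString s * PauliString t * (PauliString t * PauliString s) = 1 := by
    rw [mul_assoc, ← mul_assoc (PauliString t), pauliString_mul_self, one_mul,
      pauliString_mul_self]
  simp [h] at hunit

theorem pauliString_mul_eq_negOnePowChar_smul_iff (s t : Fin n → PauliMat) (k : ZMod 2) :
    PauliString s * PauliString t = negOnePowChar k • (PauliString t * PauliString s) ↔
      sympForm (sympVec s) (sympVec t) = k := by
  refine ⟨fun h => negOnePowChar_injective ?_, fun h => h ▸ pauliString_mul_comm s t⟩
  rw [pauliString_mul_comm] at h
  exact smul_left_injective ℂ (pauliString_mul_ne_zero t s) h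

theorem pauliString_commute_iff (s t : Fin n → PauliMat) :
    PauliString s * PauliString t = PauliString t * PauliString s ↔
      sympForm (sympVec s) (sympVec t) = 0 := by
  simpa using pauliString_mul_eq_negOnePowChar_smul_iff s t 0

theorem pauliString_anticommute_iff (s t : Fin n → PauliMat) :
    PauliString s * PauliString t = -(PauliString t * PauliString s) ↔
      sympForm (sympVec s) (sympVec t) = 1 := by
  simpa using pauliString_mul_eq_negOnePowChar_smul_iff s t 1

end PauliString

/-- A Pauli string `O` with `{O, σⱼ} = 0` and `[O, σᵣ] = 0` for all `r < j` exists
if and only if `σⱼ` cannot be written (up to phase) as a product of a subset of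
`σ₁, …, σ_{j-1}`, i.e. iff its symplectic vector is not a sum of a subset of theirs. -/
theorem correction_operator_exists_iff {n j : ℕ}
    (σs : Fin j → (Fin n → PauliMat)) (τ : Fin n → PauliMat) :
    (∃ O : Fin n → PauliMat,
      PauliString O * PauliString τ = -(PauliString τ * PauliString O) ∧
      ∀ i : Fin j,
        PauliString O * PauliString (σs i) = PauliString (σs i) * PauliString O) ↔
    ¬ ∃ S : Finset (Fin j), sympVec τ = ∑ i ∈ S, sympVec (σs i) := by
  rw [← mem_span_range_iff_exists_finset_sum_zmod_two _ fun i => sympVec (σs i),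
    ← exists_dual_eq_one_iff_notMem_span, (sympDual_surjective.comp sympVec_surjective).exists]
  simp only [Function.comp_apply, sympDual_apply, pauliString_anticommute_iff,
    pauliString_commute_iff]
end
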